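/- Let F be a number field, 𝔮 = 2O_F with 2 inert in F, S = {𝔮}, and suppose (λ, μ) is an S-unit solution of λ + μ = 1 with ord_𝔮(λ) = n ≥ 2, ord_𝔮(μ) = 0, and μ = δ² for a unit δ. With λ₁ = 1 + δ, λ₂ = 1 - δ, the pair (λ', μ') = (λ₁²/(4δ), -λ₂²/(4δ)) is a solution to the S-unit equation λ' + μ' = 1, and if ord_𝔮(λ₁) = n-1, ord_𝔮(λ₂) = 1, then max{|ord_𝔮(λ')|, |ord_𝔮(μ')|} = 2n - 4. -/

import Mathlib

open NumberField IsDedekindDomain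

/-- The additive `𝔮`-adic valuation `ord_𝔮(x) ∈ ℤ` of a nonzero element `x` of a number
field `F`, at the height-one prime `𝔮` of `O_F` (junk value `0` at `x = 0`). -/
noncomputable def ordAt {F : Type*} [Field F] [NumberField F]
    (v : HeightOneSpectrum (𝓞 F)) (x : F) : ℤ :=
  if h : v.valuation F x = 0 then 0 else -Multiplicative.toAdd (WithZero.unzero h)

/-!
From `λ₁ - λ₂ = 2δ` and `λ₁ + λ₂ = 2` we get `λ₁² - λ₂² = 4δ`, hence `λ' + μ' = 1`.
Since `λ₁ λ₂ = 1 - δ² = λ` is an `S`-unit and `λ₁, λ₂` are integral, both are `S`-units; so is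
`4δ`, as `2` generates `𝔮`. At `𝔮` we have `ord(4δ) = 2`, so `ord(λ') = 2(n - 1) - 2` and
`ord(μ') = 2 - 2 = 0`.
-/

open WithZero

namespace IsDedekindDomain.HeightOneSpectrum

variable {R K : Type*} [CommRing R] [IsDedekindDomain R] [Field K] [Algebra R K]
  [IsFractionRing R K] (w : HeightOneSpectrum R)

theorem valuation_algebraMap_unit (u : Rˣ) : w.valuation K (algebraMap R K u) = 1 :=
  w.valuation_eq_one_iff_notMem.2 fun hu ↦
    w.isPrime.ne_top (Ideal.eq_top_of_isUnit_mem _ hu u.isUnit)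

theorem valuation_generator_of_ne {v : HeightOneSpectrum R} {r : R}
    (hv : v.asIdeal = Ideal.span {r}) (hw : w ≠ v) : w.valuation K (algebraMap R K r) = 1 := by
  refine w.valuation_eq_one_iff_notMem.2 fun hr ↦ hw ?_
  have hle : v.asIdeal ≤ w.asIdeal := hv ▸ (Ideal.span_singleton_le_iff_mem _).2 hr
  exact HeightOneSpectrum.ext ((v.isMaximal.eq_of_le w.isPrime.ne_top hle).symm)

theorem valuation_eq_one_of_mul_eq_one {a b : R}
    (hab : w.valuation K (algebraMap R K a * algebraMap R K b) = 1) :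
    w.valuation K (algebraMap R K a) = 1 := by
  rw [map_mul] at hab
  exact eq_one_of_one_le_mul_left (w.valuation_le_one a) (w.valuation_le_one b) hab.ge

end IsDedekindDomain.HeightOneSpectrum

section ordAt

variable {F : Type*} [Field F] [NumberField F] (v : HeightOneSpectrum (𝓞 F))

theorem ordAt_eq_neg_log (x : F) : ordAt v x = -log (v.valuation F x) := by
  unfold ordAt
  split_ifs with h
  · simp [h]
  · rw [toAdd_unzero_eq_log]

theorem ne_zero_of_ordAt_ne_zero {x : F} (hx : ordAt v x ≠ 0) : x ≠ 0 := by
  rintro rfl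
  simp [ordAt_eq_neg_log] at hx

theorem ordAt_mul {x y : F} (hx : x ≠ 0) (hy : y ≠ 0) :
    ordAt v (x * y) = ordAt v x + ordAt v y := by
  simp [ordAt_eq_neg_log, hx, hy]
  ring

theorem ordAt_div {x y : F} (hx : x ≠ 0) (hy : y ≠ 0) :
    ordAt v (x / y) = ordAt v x - ordAt v y := by
  simp [ordAt_eq_neg_log, hx, hy]
  ring

theorem ordAt_pow (x : F) (k : ℕ) : ordAt v (x ^ k) = k * ordAt v x := by
  simp [ordAt_eq_neg_log]

theorem ordAt_neg (x : F) : ordAt v (-x) = ordAt v x := by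
  simp [ordAt_eq_neg_log]

theorem ordAt_algebraMap_unit (u : (𝓞 F)ˣ) : ordAt v (algebraMap (𝓞 F) F u) = 0 := by
  simp [ordAt_eq_neg_log, v.valuation_algebraMap_unit]

theorem ordAt_generator {r : 𝓞 F} (hr : r ≠ 0) (hv : v.asIdeal = Ideal.span {r}) :
    ordAt v (algebraMap (𝓞 F) F r) = 1 := by
  simp [ordAt_eq_neg_log, HeightOneSpectrum.valuation_of_algebraMap,
    v.intValuation_singleton hr hv]

theorem ordAt_four_mul_unit (h2 : v.asIdeal = Ideal.span {(2 : 𝓞 F)}) (u : (𝓞 F)ˣ) :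
    ordAt v (4 * algebraMap (𝓞 F) F u) = 2 := by
  have h4 : (4 : F) = algebraMap (𝓞 F) F 2 ^ 2 := by rw [map_ofNat]; norm_num
  rw [h4, ordAt_mul v (by simp) (u.isUnit.map _).ne_zero, ordAt_pow,
    ordAt_generator v two_ne_zero h2, ordAt_algebraMap_unit]
  norm_num

theorem valuation_four_mul_unit_of_ne (h2 : v.asIdeal = Ideal.span {(2 : 𝓞 F)})
    {w : HeightOneSpectrum (𝓞 F)} (hw : w ≠ v) (u : (𝓞 F)ˣ) :
    w.valuation F (4 * algebraMap (𝓞 F) F u) = 1 := by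
  have h4 : (4 : F) = algebraMap (𝓞 F) F 2 ^ 2 := by rw [map_ofNat]; norm_num
  rw [h4, map_mul, map_pow, w.valuation_generator_of_ne h2 hw, w.valuation_algebraMap_unit,
    one_pow, one_mul]

end ordAt

theorem sq_one_add_div_add_neg_sq_one_sub_div {K : Type*} [Field K] {d : K} (hd : 4 * d ≠ 0) :
    (1 + d) ^ 2 / (4 * d) + -(1 - d) ^ 2 / (4 * d) = 1 := by
  rw [← add_div, div_eq_one_iff_eq hd]
  ring

theorem sunit_descent_new_solution_general (F : Type*) [Field F] [NumberField F]
    (v : HeightOneSpectrum (𝓞 F)) (h2 : v.asIdeal = Ideal.span {(2 : 𝓞 F)})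
    (lam mu : F)
    (hsum : lam + mu = 1)
    (hlamS : ∀ w : HeightOneSpectrum (𝓞 F), w ≠ v → w.valuation F lam = 1)
    (n : ℕ) (hn : 2 ≤ n)
    (δ : (𝓞 F)ˣ) (hδ : mu = algebraMap (𝓞 F) F (δ : 𝓞 F) ^ 2)
    (lam₁ lam₂ : F) (hlam₁ : lam₁ = 1 + algebraMap (𝓞 F) F (δ : 𝓞 F))
    (hlam₂ : lam₂ = 1 - algebraMap (𝓞 F) F (δ : 𝓞 F))
    (hord₁ : ordAt v lam₁ = (n : ℤ) - 1) (hord₂ : ordAt v lam₂ = 1) :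
    lam₁ ^ 2 / (4 * algebraMap (𝓞 F) F (δ : 𝓞 F)) +
      -(lam₂ ^ 2) / (4 * algebraMap (𝓞 F) F (δ : 𝓞 F)) = 1 ∧
    (∀ w : HeightOneSpectrum (𝓞 F), w ≠ v →
      w.valuation F (lam₁ ^ 2 / (4 * algebraMap (𝓞 F) F (δ : 𝓞 F))) = 1 ∧
      w.valuation F (-(lam₂ ^ 2) / (4 * algebraMap (𝓞 F) F (δ : 𝓞 F))) = 1) ∧
    max |ordAt v (lam₁ ^ 2 / (4 * algebraMap (𝓞 F) F (δ : 𝓞 F)))|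
        |ordAt v (-(lam₂ ^ 2) / (4 * algebraMap (𝓞 F) F (δ : 𝓞 F)))| =
      2 * (n : ℤ) - 4 := by
  have h4d : 4 * algebraMap (𝓞 F) F (δ : 𝓞 F) ≠ 0 :=
    mul_ne_zero (by norm_num) (δ.isUnit.map _).ne_zero
  have hint₁ : lam₁ = algebraMap (𝓞 F) F (1 + δ) := by rw [hlam₁, map_add, map_one]
  have hint₂ : lam₂ = algebraMap (𝓞 F) F (1 - δ) := by rw [hlam₂, map_sub, map_one]
  have hprod : lam₁ * lam₂ = lam := by rw [hlam₁, hlam₂, eq_sub_of_add_eq hsum, hδ]; ring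
  refine ⟨hlam₁ ▸ hlam₂ ▸ sq_one_add_div_add_neg_sq_one_sub_div h4d, fun w hw ↦ ?_, ?_⟩
  · -- `λ₁` and `λ₂` are integral with product the `S`-unit `λ`, so both are `S`-units.
    have hw₁ : w.valuation F lam₁ = 1 := hint₁ ▸ w.valuation_eq_one_of_mul_eq_one
      (b := 1 - (δ : 𝓞 F)) (by rw [← hint₁, ← hint₂, hprod, hlamS w hw])
    have hw₂ : w.valuation F lam₂ = 1 := hint₂ ▸ w.valuation_eq_one_of_mul_eq_one
      (b := 1 + (δ : 𝓞 F)) (by rw [← hint₁, ← hint₂, mul_comm, hprod, hlamS w hw])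
    simp only [map_div₀, Valuation.map_neg, map_pow, hw₁, hw₂,
      valuation_four_mul_unit_of_ne v h2 hw, one_pow, div_one, and_self]
  · have hlam₁0 := ne_zero_of_ordAt_ne_zero v (by omega : ordAt v lam₁ ≠ 0)
    have hlam₂0 := ne_zero_of_ordAt_ne_zero v (by omega : ordAt v lam₂ ≠ 0)
    rw [ordAt_div v (by simpa) h4d, ordAt_div v (by simpa) h4d, ordAt_neg, ordAt_pow, ordAt_pow,
      hord₁, hord₂, ordAt_four_mul_unit v h2]
    simp only [Nat.cast_ofNat, mul_one, sub_self, abs_zero]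
    rw [abs_of_nonneg (by omega), max_eq_left (by omega)]
    ring

/-- Let `F` be a number field, `𝔮 = 2O_F` with `2` inert in `F`, `S = {𝔮}`, and suppose
`(λ, μ)` is an `S`-unit solution of `λ + μ = 1` with `ord_𝔮(λ) = n ≥ 2`, `ord_𝔮(μ) = 0`
and `μ = δ²` for a unit `δ`. With `λ₁ = 1 + δ`, `λ₂ = 1 - δ`, the pair
`(λ', μ') = (λ₁²/(4δ), -λ₂²/(4δ))` is a solution of the `S`-unit equation `λ' + μ' = 1`,
and if `ord_𝔮(λ₁) = n - 1` and `ord_𝔮(λ₂) = 1` then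
`max(|ord_𝔮(λ')|, |ord_𝔮(μ')|) = 2n - 4`. -/
theorem sunit_descent_new_solution (F : Type*) [Field F] [NumberField F]
    (v : HeightOneSpectrum (𝓞 F)) (h2 : v.asIdeal = Ideal.span {(2 : 𝓞 F)})
    (lam mu : F) (hint : ∃ a : 𝓞 F, algebraMap (𝓞 F) F a = lam)
    (hsum : lam + mu = 1)
    (hlamS : ∀ w : HeightOneSpectrum (𝓞 F), w ≠ v → w.valuation F lam = 1)
    (hmuS : ∀ w : HeightOneSpectrum (𝓞 F), w ≠ v → w.valuation F mu = 1)
    (n : ℕ) (hn : 2 ≤ n) (hlamn : ordAt v lam = n) (hmu0 : ordAt v mu = 0)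
    (δ : (𝓞 F)ˣ) (hδ : mu = algebraMap (𝓞 F) F (δ : 𝓞 F) ^ 2)
    (lam₁ lam₂ : F) (hlam₁ : lam₁ = 1 + algebraMap (𝓞 F) F (δ : 𝓞 F))
    (hlam₂ : lam₂ = 1 - algebraMap (𝓞 F) F (δ : 𝓞 F))
    (hord₁ : ordAt v lam₁ = (n : ℤ) - 1) (hord₂ : ordAt v lam₂ = 1) :
    lam₁ ^ 2 / (4 * algebraMap (𝓞 F) F (δ : 𝓞 F)) +
      -(lam₂ ^ 2) / (4 * algebraMap (𝓞 F) F (δ : 𝓞 F)) = 1 ∧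
    (∀ w : HeightOneSpectrum (𝓞 F), w ≠ v →
      w.valuation F (lam₁ ^ 2 / (4 * algebraMap (𝓞 F) F (δ : 𝓞 F))) = 1 ∧
      w.valuation F (-(lam₂ ^ 2) / (4 * algebraMap (𝓞 F) F (δ : 𝓞 F))) = 1) ∧
    max |ordAt v (lam₁ ^ 2 / (4 * algebraMap (𝓞 F) F (δ : 𝓞 F)))|
        |ordAt v (-(lam₂ ^ 2) / (4 * algebraMap (𝓞 F) F (δ : 𝓞 F)))| =
      2 * (n : ℤ) - 4 :=
  sunit_descent_new_solution_general F v h2 lam mu hsum hlamS n hn δ hδ lam₁ lam₂ hlam₁ hlam₂ hord₁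
    hord₂
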